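/- arXiv:1010.0861 — 2 statements merged into one kernel-verified Lean document; each statement's English description precedes it below -/
import Mathlib

section
/- For P ∈ P(so(p,q)), define Φ₁(P)_X(Y,Z) = H_X Y ∧ Z + Y ∧ H_X Z where g(H_X Y, Z) = g(P(Y)Z + P(Z)Y, X), and Φ₂(P)_X(Y,Z) = P((Y∧Z)X) + X ∧ (P(Z)Y − P(Y)Z). Then for every X, the maps Φ₁(P)_X and Φ₂(P)_X are algebraic curvature tensors (they take values in so(p,q) and satisfy the first Bianchi identity). -/
open LinearMap Finset Module

variable {V : Type*} [AddCommGroup V] [Module ℝ V]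

/-- The endomorphism `(X ∧ Y) : Z ↦ g(X,Z)•Y - g(Y,Z)•X`. -/
noncomputable def wdg (g : LinearMap.BilinForm ℝ V) (X Y : V) : V →ₗ[ℝ] V :=
  (g X).smulRight Y - (g Y).smulRight X

/-- `A` belongs to `so(p,q)`: it is skew-adjoint with respect to `g`. -/
def skewAdj (g : LinearMap.BilinForm ℝ V) (A : V →ₗ[ℝ] V) : Prop :=
  ∀ X Y : V, g (A X) Y + g X (A Y) = 0

/-- Nondegeneracy of a bilinear form. -/
def Nondeg (g : LinearMap.BilinForm ℝ V) : Prop :=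
  ∀ X : V, (∀ Y : V, g X Y = 0) → X = 0

/-- `R` is an algebraic curvature tensor: bilinear, skew, `so(p,q)`-valued,
and satisfying the first Bianchi identity. -/
def isCurv (g : LinearMap.BilinForm ℝ V) (R : V → V → V →ₗ[ℝ] V) : Prop :=
  (∀ (a : ℝ) (X X' Y : V), R (a • X + X') Y = a • R X Y + R X' Y) ∧
  (∀ X Y : V, R X Y = - R Y X) ∧
  (∀ X Y : V, skewAdj g (R X Y)) ∧
  (∀ X Y Z : V, R X Y Z + R Y Z X + R Z X Y = 0)

/-- `(H ∧ g)(X,Y) = HX ∧ Y + X ∧ HY`. -/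
noncomputable def hwdg (g : LinearMap.BilinForm ℝ V) (H : V →ₗ[ℝ] V) (X Y : V) : V →ₗ[ℝ] V :=
  wdg g (H X) Y + wdg g X (H Y)

/-- Ricci contraction `Ric(R)(X,Y) = tr(Z ↦ R(Z,X)Y)`, computed in a basis. -/
noncomputable def ricciOf {ι : Type*} [Fintype ι] (b : Basis ι ℝ V)
    (R : V → V → V →ₗ[ℝ] V) (X Y : V) : ℝ :=
  ∑ i, b.coord i (R (b i) X Y)

/-- The inverse Gram matrix `g^{ij}` of the basis `b`. -/
noncomputable def gramInv {ι : Type*} [Fintype ι] [DecidableEq ι]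
    (g : LinearMap.BilinForm ℝ V) (b : Basis ι ℝ V) : Matrix ι ι ℝ :=
  (Matrix.of fun i j => g (b i) (b j))⁻¹

/-- Scalar curvature: the `g`-trace of the Ricci contraction. -/
noncomputable def scalarOf {ι : Type*} [Fintype ι] [DecidableEq ι]
    (g : LinearMap.BilinForm ℝ V) (b : Basis ι ℝ V) (R : V → V → V →ₗ[ℝ] V) : ℝ :=
  ∑ i, ∑ j, gramInv g b i j * ricciOf b R (b i) (b j)

/-- The trace `tr_{1,5}(S)(X) = g^{ij} S_{X_i}(X, X_j)`. -/
noncomputable def tr15 {ι : Type*} [Fintype ι] [DecidableEq ι]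
    (g : LinearMap.BilinForm ℝ V) (b : Basis ι ℝ V)
    (S : V → V → V → V →ₗ[ℝ] V) (X : V) : V →ₗ[ℝ] V :=
  ∑ i, ∑ j, gramInv g b i j • S (b i) X (b j)

/-- `Ric̃(P) = g^{ij} P(X_i) X_j`. -/
noncomputable def ricTilde {ι : Type*} [Fintype ι] [DecidableEq ι]
    (g : LinearMap.BilinForm ℝ V) (b : Basis ι ℝ V)
    (P : V → V →ₗ[ℝ] V) : V :=
  ∑ i, ∑ j, gramInv g b i j • P (b i) (b j)

/-- Membership in `P(so(p,q))`: linear, `so(p,q)`-valued, cyclic identity. -/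
def isP (g : LinearMap.BilinForm ℝ V) (P : V → V →ₗ[ℝ] V) : Prop :=
  (∀ (a : ℝ) (X X' : V), P (a • X + X') = a • P X + P X') ∧
  (∀ X : V, skewAdj g (P X)) ∧
  (∀ X Y Z : V, g (P X Y) Z + g (P Y Z) X + g (P Z X) Y = 0)

/-! The first Bianchi identity holds for both maps as an identity of vectors. For `Φ₁` the cyclic sum
of `H_X Y ∧ Z + Y ∧ H_X Z` cancels in pairs because `H_X` is `g`-symmetric. For `Φ₂`, linearity gives
`P((Y ∧ Z) X) = g(Y,X) P(Z) - g(Z,X) P(Y)`, whose cyclic sum cancels the `so`-parts of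
`X ∧ (P(Z)Y - P(Y)Z)`; what remains is a multiple of `X` whose coefficient is the difference of two
instances of the cyclic identity of `P`. -/

section Wedge

variable {g : LinearMap.BilinForm ℝ V}

@[simp]
theorem wdg_apply (X Y Z : V) : wdg g X Y Z = g X Z • Y - g Y Z • X := by
  simp [wdg]

theorem wdg_smul_add_left (a : ℝ) (X X' Y : V) :
    wdg g (a • X + X') Y = a • wdg g X Y + wdg g X' Y := by
  ext Z
  simp only [wdg_apply, map_add, map_smul, LinearMap.add_apply, LinearMap.smul_apply]
  module

theorem skewAdj_add {A B : V →ₗ[ℝ] V} (hA : skewAdj g A) (hB : skewAdj g B) :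
    skewAdj g (A + B) := by
  intro X Y
  simp only [LinearMap.add_apply, map_add]
  linear_combination hA X Y + hB X Y

theorem skewAdj_wdg (hsymm : ∀ X Y : V, g X Y = g Y X) (X Y : V) : skewAdj g (wdg g X Y) := by
  intro U W
  simp only [wdg_apply, map_sub, map_smul, LinearMap.sub_apply, LinearMap.smul_apply, smul_eq_mul]
  linear_combination g Y W * hsymm X U - g X W * hsymm Y U

end Wedge

section Phi1

variable {g : LinearMap.BilinForm ℝ V} {H : V →ₗ[ℝ] V}

theorem hwdg_bianchi (hsymm : ∀ X Y : V, g X Y = g Y X) (hH : ∀ Y Z : V, g (H Y) Z = g (H Z) Y)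
    (X Y Z : V) : hwdg g H X Y Z + hwdg g H Y Z X + hwdg g H Z X Y = 0 := by
  simp only [hwdg, LinearMap.add_apply, wdg_apply]
  linear_combination (norm := module) (hH X Z) • Y + (hH Y X) • Z + (hH Z Y) • X
    + (hsymm Z Y) • H X + (hsymm X Z) • H Y + (hsymm Y X) • H Z

theorem isCurv_hwdg (hsymm : ∀ X Y : V, g X Y = g Y X) (hH : ∀ Y Z : V, g (H Y) Z = g (H Z) Y) :
    isCurv g (hwdg g H) := by
  refine ⟨fun a X X' Y => ?_, fun X Y => ?_, fun X Y => ?_, hwdg_bianchi hsymm hH⟩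
  · simp only [hwdg, map_add, map_smul, wdg_smul_add_left]
    module
  · ext Z
    simp only [hwdg, LinearMap.add_apply, LinearMap.neg_apply, wdg_apply]
    module
  · exact skewAdj_add (skewAdj_wdg hsymm _ _) (skewAdj_wdg hsymm _ _)

end Phi1

section Phi2

variable {g : LinearMap.BilinForm ℝ V} {P : V → V →ₗ[ℝ] V}

theorem isP.map_smul_sub_smul (hP : isP g P) (a b : ℝ) (u v : V) :
    P (a • u - b • v) = a • P u - b • P v := by
  have map_zero : P 0 = 0 := by simpa using hP.1 1 0 0
  have map_smul (c : ℝ) (w : V) : P (c • w) = c • P w := by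
    simpa [map_zero] using hP.1 c w 0
  rw [sub_eq_add_neg, ← neg_smul, hP.1, map_smul, neg_smul, ← sub_eq_add_neg]

theorem isP.apply_wdg (hP : isP g P) (X Y Z : V) :
    P (wdg g Y Z X) = g Y X • P Z - g Z X • P Y := by
  rw [wdg_apply, hP.map_smul_sub_smul]

noncomputable def Φ₂ (g : LinearMap.BilinForm ℝ V) (P : V → V →ₗ[ℝ] V) (X : V) :
    V → V → V →ₗ[ℝ] V :=
  fun Y Z => P (wdg g Y Z X) + wdg g X (P Z Y - P Y Z)

theorem Φ₂_eq (hP : isP g P) (X Y Z : V) :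
    Φ₂ g P X Y Z = g Y X • P Z - g Z X • P Y + wdg g X (P Z Y - P Y Z) := by
  rw [Φ₂, hP.apply_wdg]

theorem Φ₂_bianchi (hsymm : ∀ X Y : V, g X Y = g Y X) (hP : isP g P) (X Y Z W : V) :
    Φ₂ g P X Y Z W + Φ₂ g P X Z W Y + Φ₂ g P X W Y Z = 0 := by
  simp only [Φ₂_eq hP, LinearMap.add_apply, LinearMap.sub_apply, LinearMap.smul_apply, wdg_apply,
    map_sub]
  linear_combination (norm := module) (hsymm Y X) • (P Z W - P W Z)
    + (hsymm Z X) • (P W Y - P Y W) + (hsymm W X) • (P Y Z - P Z Y)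
    + (hP.2.2 Y Z W - hP.2.2 Z Y W) • X

theorem isCurv_Φ₂ (hsymm : ∀ X Y : V, g X Y = g Y X) (hP : isP g P) (X : V) :
    isCurv g (Φ₂ g P X) := by
  refine ⟨fun a Y Y' Z => ?_, fun Y Z => ?_, fun Y Z => ?_, Φ₂_bianchi hsymm hP X⟩
  · ext U
    simp only [Φ₂_eq hP, hP.1, LinearMap.add_apply, LinearMap.sub_apply,
      LinearMap.smul_apply, map_add, map_smul, wdg_apply, map_sub]
    module
  · ext U
    simp only [Φ₂_eq hP, LinearMap.add_apply, LinearMap.sub_apply, LinearMap.smul_apply,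
      LinearMap.neg_apply, wdg_apply, map_sub]
    module
  · exact skewAdj_add (hP.2.1 _) (skewAdj_wdg hsymm _ _)

end Phi2

theorem stmt_6_general (g : LinearMap.BilinForm ℝ V)
    (hsymm : ∀ X Y : V, g X Y = g Y X)
    (P : V → V →ₗ[ℝ] V) (hP : isP g P)
    (H : V → V →ₗ[ℝ] V)
    (hH : ∀ X Y Z : V, g (H X Y) Z = g (P Y Z + P Z Y) X) :
    (∀ X : V, isCurv g (fun Y Z => hwdg g (H X) Y Z)) ∧
    (∀ X : V, isCurv g (fun Y Z => P (wdg g Y Z X) + wdg g X (P Z Y - P Y Z))) := by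
  have hH_symm (X Y Z : V) : g (H X Y) Z = g (H X Z) Y := by
    rw [hH, hH, add_comm]
  exact ⟨fun X => isCurv_hwdg hsymm (hH_symm X), isCurv_Φ₂ hsymm hP⟩

theorem stmt_6 (g : LinearMap.BilinForm ℝ V)
    (hsymm : ∀ X Y : V, g X Y = g Y X) (hnd : Nondeg g)
    (P : V → V →ₗ[ℝ] V) (hP : isP g P)
    (H : V → V →ₗ[ℝ] V)
    (hH : ∀ X Y Z : V, g (H X Y) Z = g (P Y Z + P Z Y) X) :
    (∀ X : V, isCurv g (fun Y Z => hwdg g (H X) Y Z)) ∧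
    (∀ X : V, isCurv g (fun Y Z => P (wdg g Y Z X) + wdg g X (P Z Y - P Y Z))) :=
  stmt_6_general g hsymm P hP H hH
end

section
/- The trace identities in the Kähler case hold: tr_{1,5}((Ψ₁ − Ψ₂)(P₀)) = 2(n+3)·P₀ for P₀ ∈ P₀(u(p,q)) (the kernel of Ric̃), and tr_{1,5}((Ψ₁ − Ψ₂)(P₁)) = 4(n+2)·P₁ for P₁ of the form P₁(X) = c·(Id/2 ∧_J g)(v, X), where tr_{1,5}(S)(X) = Σ g^{ab} S_{X_a}(X, X_b). -/
open LinearMap Finset Module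

variable {V : Type*} [AddCommGroup V] [Module ℝ V]

/-- `X ∧_J Y = X ∧ Y + JX ∧ JY`. -/
noncomputable def wdgJ (g : LinearMap.BilinForm ℝ V) (J : V →ₗ[ℝ] V) (X Y : V) : V →ₗ[ℝ] V :=
  wdg g X Y + wdg g (J X) (J Y)

/-- The Kähler wedge `(H ∧_J g)(X,Y) = HX ∧_J Y + X ∧_J HY + 2g(HJX,Y)J + 2g(JX,Y)JH`. -/
noncomputable def hwdgJ (g : LinearMap.BilinForm ℝ V) (J : V →ₗ[ℝ] V) (H : V →ₗ[ℝ] V)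
    (X Y : V) : V →ₗ[ℝ] V :=
  wdgJ g J (H X) Y + wdgJ g J X (H Y) + (2 * g (H (J X)) Y) • J + (2 * g (J X) Y) • (J ∘ₗ H)

/-!
The trace is a sum of `g`-contractions `∑ g^{ab} F(X_a, X_b)`, almost all of which are evaluated
by the single identity `∑ g^{ab} g(X_a, Y) f(X_b) = f(Y)` for linear `f`. For every `P` in
`P(u(p,q))` this yields
`tr_{1,5}((Ψ₁ - Ψ₂)(P))(X) = (dim V + 6) P(X) - (Id/2 ∧_J g)(Ric̃(P), X)`.
The Ricci term vanishes for `P₀`. The map `P₁ = (Id/2 ∧_J g)(c v, ·)` lies in `P(u(p,q))` itself,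
with `Ric̃(P₁) = -(dim V + 2) c v`, so its coefficient is `(dim V + 6) + (dim V + 2) = 4(n + 2)`.
-/

open Matrix

section Contraction

variable {ι : Type*} [Fintype ι] [DecidableEq ι]
  {M N : Type*} [AddCommGroup M] [Module ℝ M] [AddCommGroup N] [Module ℝ N]

noncomputable def gContract (g : LinearMap.BilinForm ℝ V) (b : Basis ι ℝ V) (F : V → V → M) : M :=
  ∑ i, ∑ j, gramInv g b i j • F (b i) (b j)

variable {g : LinearMap.BilinForm ℝ V} {b : Basis ι ℝ V}

lemma gContract_add (F G : V → V → M) :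
    gContract g b (fun A Z => F A Z + G A Z) = gContract g b F + gContract g b G := by
  simp only [gContract, smul_add, Finset.sum_add_distrib]

lemma gContract_sub (F G : V → V → M) :
    gContract g b (fun A Z => F A Z - G A Z) = gContract g b F - gContract g b G := by
  simp only [gContract, smul_sub, Finset.sum_sub_distrib]

lemma gContract_neg (F : V → V → M) :
    gContract g b (fun A Z => -F A Z) = -gContract g b F := by
  simp only [gContract, smul_neg, Finset.sum_neg_distrib]

lemma gContract_smul (c : ℝ) (F : V → V → M) :
    gContract g b (fun A Z => c • F A Z) = c • gContract g b F := by
  simp only [gContract, Finset.smul_sum, smul_comm c]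

lemma gContract_smul_const (φ : V → V → ℝ) (m : M) :
    gContract g b (fun A Z => φ A Z • m) = gContract g b φ • m := by
  simp only [gContract, smul_eq_mul, Finset.sum_smul, mul_smul]

lemma map_gContract {L : M → N} (hL : IsLinearMap ℝ L) (F : V → V → M) :
    L (gContract g b F) = gContract g b (fun A Z => L (F A Z)) := by
  simp only [gContract]
  rw [← IsLinearMap.mk'_apply hL]
  simp only [map_sum, map_smul, IsLinearMap.mk'_apply]

lemma gContract_gContract (G : V → V → V → V → M) :
    gContract g b (fun A Z => gContract g b (fun A' Z' => G A Z A' Z'))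
      = gContract g b (fun A' Z' => gContract g b (fun A Z => G A Z A' Z')) := by
  simp only [gContract, Finset.smul_sum, smul_smul]
  refine (Finset.sum_congr rfl fun _ _ => Finset.sum_comm).trans ?_
  refine Finset.sum_comm.trans ?_
  refine (Finset.sum_congr rfl fun _ _ => Finset.sum_congr rfl fun _ _ => Finset.sum_comm).trans ?_
  refine (Finset.sum_congr rfl fun _ _ => Finset.sum_comm).trans ?_
  simp only [mul_comm]

lemma gramInv_mul_gram (hnd : Nondeg g) :
    gramInv g b * Matrix.of (fun i j => g (b i) (b j)) = 1 := by
  have hdet : (Matrix.of fun i j => g (b i) (b j)).det ≠ 0 := by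
    have : Matrix.of (fun i j => g (b i) (b j)) = LinearMap.BilinForm.toMatrix b g := by
      ext i j; simp [LinearMap.BilinForm.toMatrix_apply]
    rw [this, ← Matrix.separatingLeft_iff_det_ne_zero]
    exact (LinearMap.BilinForm.separatingLeft_toMatrix_iff b).mpr hnd
  exact Matrix.nonsing_inv_mul _ hdet.isUnit

lemma gramInv_comm (hsymm : ∀ X Y : V, g X Y = g Y X) (i j : ι) :
    gramInv g b i j = gramInv g b j i := by
  have hG : (Matrix.of fun i j => g (b i) (b j))ᵀ = Matrix.of fun i j => g (b i) (b j) := by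
    ext i j; exact hsymm _ _
  change gramInv g b i j = (gramInv g b)ᵀ i j
  rw [gramInv, Matrix.transpose_nonsing_inv, hG]

lemma sum_gramInv_mul (hnd : Nondeg g) (Y : V) (i : ι) :
    ∑ j, gramInv g b i j * g (b j) Y = b.repr Y i := by
  have h := congrFun (congrFun (gramInv_mul_gram (b := b) hnd) i)
  simp only [Matrix.mul_apply, Matrix.of_apply] at h
  conv_lhs => rw [← b.sum_repr Y]
  simp only [map_sum, map_smul, smul_eq_mul, Finset.mul_sum]
  rw [Finset.sum_comm]
  simp only [mul_left_comm (gramInv g b i _), ← Finset.mul_sum, h, Matrix.one_apply, mul_ite,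
    mul_one, mul_zero, Fintype.sum_ite_eq]

lemma gContract_comm (hsymm : ∀ X Y : V, g X Y = g Y X) (F : V → V → M) :
    gContract g b (fun A Z => F Z A) = gContract g b F := by
  rw [gContract, Finset.sum_comm]
  simp only [gramInv_comm hsymm]
  rfl

lemma gContract_apply_right (hnd : Nondeg g) {f : V → M} (hf : IsLinearMap ℝ f) (Y : V) :
    gContract g b (fun A Z => g Z Y • f A) = f Y := by
  have hY : ∑ i, b.repr Y i • f (b i) = f Y := by
    conv_rhs => rw [← b.sum_repr Y, ← IsLinearMap.mk'_apply hf]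
    simp only [map_sum, map_smul, IsLinearMap.mk'_apply]
  simp only [gContract, smul_smul, ← Finset.sum_smul, sum_gramInv_mul hnd, hY]

lemma gContract_apply_left (hsymm : ∀ X Y : V, g X Y = g Y X) (hnd : Nondeg g) {f : V → M}
    (hf : IsLinearMap ℝ f) (Y : V) :
    gContract g b (fun A Z => g A Y • f Z) = f Y := by
  rw [← gContract_comm hsymm]
  exact gContract_apply_right hnd hf Y

lemma gContract_self (hnd : Nondeg g) :
    gContract g b (fun A Z => g Z A) = Fintype.card ι := by
  simp only [gContract, smul_eq_mul, sum_gramInv_mul hnd, Basis.repr_self,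
    Finsupp.single_eq_same, Finset.sum_const, Finset.card_univ, nsmul_eq_mul, mul_one]

lemma gContract_eq_zero_of_skewAdj (hsymm : ∀ X Y : V, g X Y = g Y X) {L : V →ₗ[ℝ] V}
    (hL : skewAdj g L) : gContract g b (fun A Z => g (L Z) A) = 0 := by
  have h : gContract g b (fun A Z => g (L Z) A) = -gContract g b (fun A Z => g (L Z) A) := by
    conv_lhs => rw [← gContract_comm hsymm]
    rw [← gContract_neg]
    congr 1; ext A Z
    rw [hsymm, eq_neg_iff_add_eq_zero, add_comm, hL]
  linarith

/-- Expand `T A` by `gContract_apply_right`, exchange the two contractions, and contract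
`g(Z', T A) = -g(A, T Z')` by `gContract_apply_left`. -/
lemma gContract_comp_skewAdj_left (hsymm : ∀ X Y : V, g X Y = g Y X) (hnd : Nondeg g)
    {T : V →ₗ[ℝ] V} (hT : skewAdj g T) (F : V → V → M)
    (hF₁ : ∀ Z, IsLinearMap ℝ (F · Z)) (hF₂ : ∀ A, IsLinearMap ℝ (F A)) :
    gContract g b (fun A Z => F (T A) Z) = -gContract g b (fun A Z => F A (T Z)) := by
  have hexpand : ∀ A Z, F (T A) Z = gContract g b (fun A' Z' => g Z' (T A) • F A' Z) :=
    fun A Z => (gContract_apply_right hnd (hF₁ Z) (T A)).symm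
  rw [show (fun A Z => F (T A) Z) = _ from funext₂ hexpand, gContract_gContract,
    ← gContract_neg]
  congr 1; ext A' Z'
  have hTZ' : ∀ A, g Z' (T A) = -g A (T Z') := fun A => by
    rw [hsymm Z', eq_neg_iff_add_eq_zero]; exact hT A Z'
  simp only [hTZ', neg_smul, gContract_neg, gContract_apply_left hsymm hnd (hF₂ A')]

end Contraction

lemma eq_of_forall_apply_eq {g : LinearMap.BilinForm ℝ V} (hnd : Nondeg g) {X Y : V}
    (h : ∀ W, g X W = g Y W) : X = Y :=
  sub_eq_zero.mp (hnd _ fun W => by rw [map_sub, LinearMap.sub_apply, h, sub_self])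

lemma skewAdj_smul {g : LinearMap.BilinForm ℝ V} {L : V →ₗ[ℝ] V} (hL : skewAdj g L) (c : ℝ) :
    skewAdj g (c • L) := fun X Y => by
  simp only [LinearMap.smul_apply, map_smul, LinearMap.smul_apply, smul_eq_mul, ← mul_add]
  rw [hL, mul_zero]

section Kaehler

variable {ι : Type*} [Fintype ι] [DecidableEq ι] {g : LinearMap.BilinForm ℝ V}
  {b : Basis ι ℝ V} {J : V →ₗ[ℝ] V}

lemma skewAdj_of_isometry (hJ2 : ∀ X : V, J (J X) = -X) (hJg : ∀ X Y : V, g (J X) (J Y) = g X Y) :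
    skewAdj g J := fun X Y => by
  rw [← hJg X (J Y), hJ2, map_neg, add_neg_cancel]

lemma wdgJ_apply (X Y Z : V) :
    wdgJ g J X Y Z = g X Z • Y - g Y Z • X + (g (J X) Z • J Y - g (J Y) Z • J X) := rfl

lemma wdgJ_swap (X Y : V) : wdgJ g J X Y = -wdgJ g J Y X := by
  ext Z; simp only [wdgJ_apply, LinearMap.neg_apply]; abel

lemma wdgJ_add_left (X X' Y : V) : wdgJ g J (X + X') Y = wdgJ g J X Y + wdgJ g J X' Y := by
  ext Z; simp only [wdgJ_apply, LinearMap.add_apply, map_add, LinearMap.add_apply, add_smul]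
  module

lemma isLinearMap_wdgJ_right (X : V) : IsLinearMap ℝ (wdgJ g J X) :=
  ⟨fun Y Y' => by ext; simp only [wdgJ_apply, map_add, LinearMap.add_apply]; module,
    fun c Y => by ext; simp only [wdgJ_apply, map_smul, LinearMap.smul_apply]; module⟩

lemma gContract_wdgJ_left (hsymm : ∀ X Y : V, g X Y = g Y X) (hnd : Nondeg g)
    (hJ2 : ∀ X : V, J (J X) = -X) (hJg : ∀ X Y : V, g (J X) (J Y) = g X Y)
    {h m : V →ₗ[ℝ] V} (hm : skewAdj g m) (hhm : h - J ∘ₗ h ∘ₗ J = m) :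
    gContract g b (fun A Z => wdgJ g J (h A) Z) = (-2 : ℝ) • m := by
  have hJl : ∀ a c, g (J a) c = -g a (J c) := fun a c =>
    eq_neg_of_add_eq_zero_left (skewAdj_of_isometry hJ2 hJg a c)
  ext U
  refine eq_of_forall_apply_eq hnd fun W => ?_
  have hexp : ∀ A Z, g (wdgJ g J (h A) Z U) W = g Z W • g (h A) U - g Z U • g (h A) W
      - g Z (J W) • g (J (h A)) U + g Z (J U) • g (J (h A)) W := fun A Z => by
    simp only [wdgJ_apply, map_add, map_sub, map_smul, LinearMap.add_apply, LinearMap.sub_apply,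
      LinearMap.smul_apply, hJl Z, smul_eq_mul]
    ring
  rw [map_gContract (L := fun T : V →ₗ[ℝ] V => g (T U) W)
    ⟨fun _ _ => by simp, fun _ _ => by simp⟩]
  simp only [hexp, gContract_add, gContract_sub]
  rw [gContract_apply_right hnd ⟨fun _ _ => by simp, fun _ _ => by simp⟩,
    gContract_apply_right hnd ⟨fun _ _ => by simp, fun _ _ => by simp⟩,
    gContract_apply_right hnd ⟨fun _ _ => by simp, fun _ _ => by simp⟩,
    gContract_apply_right hnd ⟨fun _ _ => by simp, fun _ _ => by simp⟩]
  subst hhm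
  have hWU := hm W U
  simp only [LinearMap.sub_apply, LinearMap.comp_apply, map_sub, LinearMap.smul_apply, map_smul,
    smul_eq_mul, hsymm W] at hWU ⊢
  linarith

end Kaehler

section RicciContraction

variable {ι : Type*} [Fintype ι] [DecidableEq ι] {g : LinearMap.BilinForm ℝ V}
  {b : Basis ι ℝ V} {J : V →ₗ[ℝ] V}

lemma tr15_eq_gContract (S : V → V → V → V →ₗ[ℝ] V) (X : V) :
    tr15 g b S X = gContract g b (fun A Z => S A X Z) := rfl

lemma ricTilde_eq_gContract (P : V → V →ₗ[ℝ] V) :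
    ricTilde g b P = gContract g b (fun A Z => P A Z) := rfl

lemma exists_linearMap_of_isP {P : V → V →ₗ[ℝ] V} (hP : isP g P) :
    ∃ L : V →ₗ[ℝ] V →ₗ[ℝ] V, ⇑L = P := by
  have hadd : ∀ x y, P (x + y) = P x + P y := fun x y => by simpa using hP.1 1 x y
  have hzero : P 0 = 0 := by simpa using hadd 0 0
  exact ⟨⟨⟨P, hadd⟩, fun a x => by simpa [hzero] using hP.1 a x 0⟩, rfl⟩

variable (P : V →ₗ[ℝ] V →ₗ[ℝ] V)

lemma gContract_apply_wdgJ_right (hsymm : ∀ X Y : V, g X Y = g Y X) (hnd : Nondeg g)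
    (hJ2 : ∀ X : V, J (J X) = -X) (hJg : ∀ X Y : V, g (J X) (J Y) = g X Y) (X : V) :
    gContract g b (fun A Z => P (wdgJ g J X Z A)) = -(Fintype.card ι : ℝ) • P X := by
  have hpt : ∀ A Z, P (wdgJ g J X Z A) = g A X • P Z - g Z A • P X
      + (g A (J X) • P (J Z) - g (J Z) A • P (J X)) := fun A Z => by
    simp only [wdgJ_apply, map_add, map_sub, map_smul, hsymm A]
  simp only [hpt, gContract_add, gContract_sub, gContract_smul_const]
  rw [gContract_apply_left hsymm hnd P.isLinear,
    gContract_apply_left hsymm hnd ⟨fun _ _ => by simp, fun _ _ => by simp⟩,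
    gContract_self hnd, gContract_eq_zero_of_skewAdj hsymm (skewAdj_of_isometry hJ2 hJg), hJ2,
    map_neg]
  module

lemma gContract_smul_J_comp_J_comp_J_left (hsymm : ∀ X Y : V, g X Y = g Y X) (hnd : Nondeg g)
    (hJ2 : ∀ X : V, J (J X) = -X) (X : V) :
    gContract g b (fun A Z => (2 * g (J X) Z) • (J ∘ₗ J ∘ₗ P (J A))) = (2 : ℝ) • P X := by
  have hpt : ∀ A Z, (2 * g (J X) Z) • (J ∘ₗ J ∘ₗ P (J A))
      = (-2 : ℝ) • (g Z (J X) • P (J A)) := fun A Z => by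
    ext U; simp only [LinearMap.smul_apply, LinearMap.comp_apply, hJ2, hsymm (J X)]
    module
  simp only [hpt, gContract_smul]
  rw [gContract_apply_right hnd ⟨fun _ _ => by simp, fun _ _ => by simp⟩, hJ2, map_neg]
  module

lemma gContract_comp_J_left (hsymm : ∀ X Y : V, g X Y = g Y X) (hnd : Nondeg g)
    (hJ2 : ∀ X : V, J (J X) = -X) (hJg : ∀ X Y : V, g (J X) (J Y) = g X Y)
    (hPJ : ∀ X : V, P X ∘ₗ J = J ∘ₗ P X) :
    gContract g b (fun A Z => P (J A) Z) = -J (ricTilde g b P) := by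
  have hPJ' : ∀ A Z, P A (J Z) = J (P A Z) := fun A Z => LinearMap.congr_fun (hPJ A) Z
  rw [gContract_comp_skewAdj_left hsymm hnd (skewAdj_of_isometry hJ2 hJg) (fun A Z => P A Z)
    (fun _ => ⟨fun _ _ => by simp, fun _ _ => by simp⟩)
    (fun _ => ⟨fun _ _ => by simp, fun _ _ => by simp⟩)]
  simp only [hPJ', ricTilde_eq_gContract, map_gContract J.isLinear]

lemma gContract_wdgJ_right_J_comp_J_left (hsymm : ∀ X Y : V, g X Y = g Y X) (hnd : Nondeg g)
    (hJ2 : ∀ X : V, J (J X) = -X) (hJg : ∀ X Y : V, g (J X) (J Y) = g X Y)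
    (hPJ : ∀ X : V, P X ∘ₗ J = J ∘ₗ P X) (X : V) :
    gContract g b (fun A Z => wdgJ g J X (J (P (J A) Z))) = wdgJ g J X (ricTilde g b P) := by
  rw [← map_gContract (isLinearMap_wdgJ_right X), ← map_gContract J.isLinear,
    gContract_comp_J_left P hsymm hnd hJ2 hJg hPJ, map_neg, hJ2, neg_neg]

lemma gContract_apply_left_eq_neg_ricTilde (hsymm : ∀ X Y : V, g X Y = g Y X)
    (hskew : ∀ X : V, skewAdj g (P X))
    (hcyc : ∀ X Y Z : V, g (P X Y) Z + g (P Y Z) X + g (P Z X) Y = 0) (Y : V) :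
    gContract g b (fun A Z => g (P A Y) Z) = -g (ricTilde g b P) Y := by
  have hc : ∀ A Z, g (P A Y) Z = -(g (P Y Z) A + g (P Z A) Y) := fun A Z => by
    linarith [hcyc A Y Z]
  simp only [hc, gContract_neg, gContract_add]
  rw [gContract_eq_zero_of_skewAdj hsymm (hskew Y), zero_add,
    gContract_comm hsymm (fun A Z => g (P A Z) Y), ricTilde_eq_gContract,
    map_gContract (L := fun v => g v Y) ⟨fun _ _ => by simp, fun _ _ => by simp⟩]

lemma gContract_J_comp_J_left (hsymm : ∀ X Y : V, g X Y = g Y X) (hnd : Nondeg g)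
    (hJ2 : ∀ X : V, J (J X) = -X) (hJg : ∀ X Y : V, g (J X) (J Y) = g X Y)
    (hskew : ∀ X : V, skewAdj g (P X))
    (hcyc : ∀ X Y Z : V, g (P X Y) Z + g (P Y Z) X + g (P Z X) Y = 0)
    (hPJ : ∀ X : V, P X ∘ₗ J = J ∘ₗ P X) (X : V) :
    gContract g b (fun A Z => g (J (P (J A) (J X))) Z) = g (ricTilde g b P) (J X) := by
  have hJ := skewAdj_of_isometry hJ2 hJg
  have hPJ' : ∀ A Z, P A (J Z) = J (P A Z) := fun A Z => LinearMap.congr_fun (hPJ A) Z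
  have hJr : ∀ a c, g a (J c) = -g (J a) c := fun a c =>
    eq_neg_of_add_eq_zero_right (hJ a c)
  simp only [hPJ', hJ2, map_neg, LinearMap.neg_apply, gContract_neg]
  rw [gContract_comp_skewAdj_left hsymm hnd hJ (fun A Z => g (P A X) Z)
    (fun _ => ⟨fun _ _ => by simp, fun _ _ => by simp⟩)
    (fun _ => ⟨fun _ _ => by simp, fun _ _ => by simp⟩)]
  simp only [hJr, ← hPJ', gContract_neg,
    gContract_apply_left_eq_neg_ricTilde P hsymm hskew hcyc, neg_neg]

/-- The `Ψ₁`-term `J P(J ·) X` and the `Ψ₂`-term `P(·) X - P(X) ·` add up to a map `h` with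
`h - J h J = -2 P(X)`, which is what `gContract_wdgJ_left` sees. -/
lemma gContract_wdgJ_left_J_comp_J (hsymm : ∀ X Y : V, g X Y = g Y X) (hnd : Nondeg g)
    (hJ2 : ∀ X : V, J (J X) = -X) (hJg : ∀ X Y : V, g (J X) (J Y) = g X Y)
    (hskew : ∀ X : V, skewAdj g (P X)) (hPJ : ∀ X : V, P X ∘ₗ J = J ∘ₗ P X) (X : V) :
    gContract g b (fun A Z => wdgJ g J (J (P (J A) X)) Z)
      = gContract g b (fun A Z => wdgJ g J A (P Z X - P X Z)) + (4 : ℝ) • P X := by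
  have hPJ' : ∀ A Z, P A (J Z) = J (P A Z) := fun A Z => LinearMap.congr_fun (hPJ A) Z
  set h : V →ₗ[ℝ] V := J ∘ₗ P.flip X ∘ₗ J + P.flip X - P X with h_def
  have hh : h - J ∘ₗ h ∘ₗ J = (-2 : ℝ) • P X := by
    ext A; simp only [h_def, LinearMap.sub_apply, LinearMap.add_apply, LinearMap.comp_apply,
      LinearMap.flip_apply, LinearMap.smul_apply, map_add, map_sub, hJ2, hPJ', map_neg]
    module
  have hswap : gContract g b (fun A Z => wdgJ g J A (P Z X - P X Z))
      = -gContract g b (fun A Z => wdgJ g J (P A X - P X A) Z) := by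
    conv_lhs => rw [← gContract_comm hsymm]
    rw [← gContract_neg]
    exact congrArg _ (funext₂ fun A Z => wdgJ_swap _ _)
  have hsum : gContract g b (fun A Z => wdgJ g J (J (P (J A) X)) Z)
      + gContract g b (fun A Z => wdgJ g J (P A X - P X A) Z)
      = gContract g b (fun A Z => wdgJ g J (h A) Z) := by
    rw [← gContract_add]
    exact congrArg _ (funext₂ fun A Z => by rw [← wdgJ_add_left]; simp [h_def, add_sub_assoc])
  rw [gContract_wdgJ_left hsymm hnd hJ2 hJg (skewAdj_smul (hskew X) (-2)) hh, smul_smul] at hsum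
  rw [hswap, eq_neg_add_iff_add_eq, add_comm, hsum]
  norm_num

end RicciContraction

/-- `psi₁ g J P X Y Z` is `Ψ₁(P)_X(Y, Z)` and `psi₂ g J P X Y Z` is `Ψ₂(P)_X(Y, Z)`. -/
noncomputable def psi₁ (g : LinearMap.BilinForm ℝ V) (J : V →ₗ[ℝ] V) (P : V → V →ₗ[ℝ] V)
    (X Y Z : V) : V →ₗ[ℝ] V :=
  hwdgJ g J (J ∘ₗ P (J X)) Y Z

noncomputable def psi₂ (g : LinearMap.BilinForm ℝ V) (J : V →ₗ[ℝ] V) (P : V → V →ₗ[ℝ] V)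
    (X Y Z : V) : V →ₗ[ℝ] V :=
  P (wdgJ g J Y Z X) + wdgJ g J X (P Z Y - P Y Z)

/-- The paper's `(Id/2 ∧_J g)(v, X)`. -/
noncomputable def idWedgeJ (g : LinearMap.BilinForm ℝ V) (J : V →ₗ[ℝ] V) (v X : V) :
    V →ₗ[ℝ] V :=
  wdgJ g J v X + (2 * g (J v) X) • J

theorem tr15_psi₁_sub_psi₂ {ι : Type*} [Fintype ι] [DecidableEq ι]
    {g : LinearMap.BilinForm ℝ V} (b : Basis ι ℝ V)
    (hsymm : ∀ X Y : V, g X Y = g Y X) (hnd : Nondeg g)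
    {J : V →ₗ[ℝ] V} (hJ2 : ∀ X : V, J (J X) = -X) (hJg : ∀ X Y : V, g (J X) (J Y) = g X Y)
    {P : V → V →ₗ[ℝ] V} (hP : isP g P) (hPJ : ∀ X : V, P X ∘ₗ J = J ∘ₗ P X) (X : V) :
    tr15 g b (fun X Y Z => psi₁ g J P X Y Z - psi₂ g J P X Y Z) X
      = ((Fintype.card ι : ℝ) + 6) • P X - idWedgeJ g J (ricTilde g b P) X := by
  obtain ⟨P, rfl⟩ := exists_linearMap_of_isP hP
  have hκ : gContract g b (fun A Z => (2 * g (J (P (J A) (J X))) Z) • J)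
      = (2 * g (ricTilde g b P) (J X)) • J := by
    rw [gContract_smul_const]
    simp only [← smul_eq_mul (a := (2 : ℝ)), gContract_smul,
      gContract_J_comp_J_left P hsymm hnd hJ2 hJg hP.2.1 hP.2.2 hPJ]
  have hρJ : g (ricTilde g b P) (J X) = -g (J (ricTilde g b P)) X :=
    eq_neg_of_add_eq_zero_left (by rw [add_comm]; exact skewAdj_of_isometry hJ2 hJg _ _)
  rw [tr15_eq_gContract]
  simp only [psi₁, psi₂, hwdgJ, LinearMap.comp_apply, gContract_add, gContract_sub]
  rw [gContract_wdgJ_left_J_comp_J P hsymm hnd hJ2 hJg hP.2.1 hPJ,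
    gContract_wdgJ_right_J_comp_J_left P hsymm hnd hJ2 hJg hPJ, hκ,
    gContract_smul_J_comp_J_comp_J_left P hsymm hnd hJ2,
    gContract_apply_wdgJ_right P hsymm hnd hJ2 hJg, wdgJ_swap X, idWedgeJ, hρJ]
  module

section IdWedge

variable {g : LinearMap.BilinForm ℝ V} {J : V →ₗ[ℝ] V}

lemma idWedgeJ_apply (v X Z : V) :
    idWedgeJ g J v X Z = g v Z • X - g X Z • v + (g (J v) Z • J X - g (J X) Z • J v)
      + (2 * g (J v) X) • J Z := rfl

lemma idWedgeJ_smul_left (a : ℝ) (v X : V) :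
    idWedgeJ g J (a • v) X = a • idWedgeJ g J v X := by
  ext Z; simp only [idWedgeJ_apply, map_smul, LinearMap.smul_apply, smul_eq_mul]; module

lemma idWedgeJ_zero_left (X : V) : idWedgeJ g J 0 X = 0 := by
  simpa using idWedgeJ_smul_left (g := g) (J := J) 0 0 X

lemma idWedgeJ_comp_J (hJ2 : ∀ X : V, J (J X) = -X) (hJg : ∀ X Y : V, g (J X) (J Y) = g X Y)
    (v X : V) : idWedgeJ g J v X ∘ₗ J = J ∘ₗ idWedgeJ g J v X := by
  have hJr : ∀ a c, g a (J c) = -g (J a) c := fun a c =>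
    eq_neg_of_add_eq_zero_right (skewAdj_of_isometry hJ2 hJg a c)
  ext Z
  simp only [LinearMap.comp_apply, idWedgeJ_apply, hJg, hJr, hJ2, map_add, map_sub, map_smul]
  module

lemma isP_idWedgeJ (hsymm : ∀ X Y : V, g X Y = g Y X) (hJ2 : ∀ X : V, J (J X) = -X)
    (hJg : ∀ X Y : V, g (J X) (J Y) = g X Y) (v : V) : isP g (idWedgeJ g J v) := by
  have hJr : ∀ a c, g a (J c) = -g (J a) c := fun a c =>
    eq_neg_of_add_eq_zero_right (skewAdj_of_isometry hJ2 hJg a c)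
  have hω : ∀ a c, g (J a) c = -g (J c) a := fun a c => by rw [hsymm, hJr]
  refine ⟨fun a X X' => ?_, fun X Y Z => ?_, fun X Y Z => ?_⟩
  · ext Z
    simp only [idWedgeJ_apply, map_add, map_smul, LinearMap.add_apply, LinearMap.smul_apply,
      smul_eq_mul]
    module
  · simp only [idWedgeJ_apply, map_add, map_sub, map_smul, LinearMap.add_apply,
      LinearMap.sub_apply, LinearMap.smul_apply, smul_eq_mul, hJr, hω Y v, hω Y X, hsymm Y v,
      hsymm Y X]
    ring
  · simp only [idWedgeJ_apply, map_add, map_sub, map_smul, LinearMap.add_apply,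
      LinearMap.sub_apply, LinearMap.smul_apply, smul_eq_mul, hω Y X, hω Z X, hω Z Y,
      hsymm Y X, hsymm Z X, hsymm Z Y]
    ring

lemma ricTilde_idWedgeJ {ι : Type*} [Fintype ι] [DecidableEq ι] (b : Basis ι ℝ V)
    (hsymm : ∀ X Y : V, g X Y = g Y X) (hnd : Nondeg g)
    (hJ2 : ∀ X : V, J (J X) = -X) (hJg : ∀ X Y : V, g (J X) (J Y) = g X Y) (v : V) :
    ricTilde g b (idWedgeJ g J v) = -((Fintype.card ι : ℝ) + 2) • v := by
  have hpt : ∀ A Z, idWedgeJ g J v A Z = g Z v • A - g Z A • v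
      + (g Z (J v) • J A - g (J A) Z • J v) + (2 : ℝ) • (g A (J v) • J Z) := fun A Z => by
    rw [idWedgeJ_apply, hsymm v, hsymm A Z, hsymm (J v), hsymm (J v) A, smul_smul]
  rw [ricTilde_eq_gContract]
  simp only [hpt, gContract_add, gContract_sub, gContract_smul, gContract_smul_const]
  rw [gContract_apply_right hnd ⟨fun _ _ => rfl, fun _ _ => rfl⟩, gContract_self hnd,
    gContract_apply_right hnd J.isLinear,
    gContract_comm hsymm (fun A Z => g (J Z) A),
    gContract_eq_zero_of_skewAdj hsymm (skewAdj_of_isometry hJ2 hJg),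
    gContract_apply_left hsymm hnd J.isLinear, hJ2]
  module

end IdWedge

theorem stmt_19 (n : ℕ) (g : LinearMap.BilinForm ℝ V)
    (hsymm : ∀ X Y : V, g X Y = g Y X) (hnd : Nondeg g)
    (J : V →ₗ[ℝ] V) (hJ2 : ∀ X : V, J (J X) = -X)
    (hJg : ∀ X Y : V, g (J X) (J Y) = g X Y)
    (b : Basis (Fin (2 * n)) ℝ V)
    (P₀ P₁ : V → V →ₗ[ℝ] V) (hP₀ : isP g P₀)
    (hP₀J : ∀ X : V, P₀ X ∘ₗ J = J ∘ₗ P₀ X)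
    (hP₀ric : ricTilde g b P₀ = 0)
    (v : V) (c : ℝ)
    (hP₁ : ∀ X : V, P₁ X = c • (wdgJ g J v X + (2 * g (J v) X) • J)) :
    (∀ X : V,
      tr15 g b (fun X Y Z =>
          hwdgJ g J (J ∘ₗ P₀ (J X)) Y Z
            - (P₀ (wdgJ g J Y Z X) + wdgJ g J X (P₀ Z Y - P₀ Y Z))) X
        = (2 * ((n : ℝ) + 3)) • P₀ X) ∧
    (∀ X : V,
      tr15 g b (fun X Y Z =>
          hwdgJ g J (J ∘ₗ P₁ (J X)) Y Z
            - (P₁ (wdgJ g J Y Z X) + wdgJ g J X (P₁ Z Y - P₁ Y Z))) X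
        = (4 * ((n : ℝ) + 2)) • P₁ X) := by
  have hN : (Fintype.card (Fin (2 * n)) : ℝ) = 2 * n := by simp
  refine ⟨fun X => ?_, fun X => ?_⟩
  · refine (tr15_psi₁_sub_psi₂ b hsymm hnd hJ2 hJg hP₀ hP₀J X).trans ?_
    rw [hP₀ric, idWedgeJ_zero_left, sub_zero, hN]
    module
  · obtain rfl : P₁ = idWedgeJ g J (c • v) :=
      funext fun X => by rw [hP₁, idWedgeJ_smul_left]; rfl
    refine (tr15_psi₁_sub_psi₂ b hsymm hnd hJ2 hJg (isP_idWedgeJ hsymm hJ2 hJg _)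
      (idWedgeJ_comp_J hJ2 hJg _) X).trans ?_
    rw [ricTilde_idWedgeJ b hsymm hnd hJ2 hJg, idWedgeJ_smul_left (-(_ + 2)), hN]
    module
end
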